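/- Let k ⊆ K be algebraically closed fields, let ν_k be a valuation on k (possibly trivial) and ν a valuation on K extending ν_k, with neither field assumed complete. Let I be an ideal of the Laurent polynomial ring k[x_1^{±1}, ..., x_m^{±1}] and let I_K = I·K[x_1^{±1}, ..., x_m^{±1}] be its extension. Then T_trop(I) = T_trop(I_K), where over each field T_trop is computed with the respective valuation: T_trop(J) = {v ∈ ℝ^m : for every nonzero f ∈ J, the minimum of ν(a_u) + ⟨u, v⟩ over u ∈ supp(f) is attained by at least two distinct u}. -/

import Mathlib

open scoped BigOperators Classical

noncomputable section

/-- The extended real line `R̄ = ℝ ∪ {∞}`. -/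
abbrev Rbar : Type := WithTop ℝ

/-- The map `a ↦ exp (−a)`, sending `∞` to `0`. -/
def expNeg (t : Rbar) : ℝ := if h : t = ⊤ then 0 else Real.exp (-(t.untop h))

/-- The topology on `R̄` in which `ℝ` carries its usual topology and the completed rays
`(a, ∞]` are a basis of neighborhoods of `∞`; equivalently, the topology induced by the
injection `expNeg : R̄ → ℝ`, which is a homeomorphism onto `[0, ∞)`. -/
instance : TopologicalSpace Rbar := TopologicalSpace.induced expNeg inferInstance

/-- `−log r`, with `−log 0 = ∞`. -/
def negLog (r : ℝ) : Rbar := if r = 0 then ⊤ else (((-Real.log r : ℝ)) : Rbar)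

/-- `ν : K → ℝ ∪ {∞}` is a (nonarchimedean) valuation: `ν(0) = ∞`,
`ν(ab) = ν(a) + ν(b)`, and `ν(a + b) ≥ min (ν a) (ν b)`. -/
structure IsVal {K : Type} [Field K] (ν : K → Rbar) : Prop where
  map_zero : ν 0 = ⊤
  map_mul : ∀ a b : K, ν (a * b) = ν a + ν b
  min_le_add : ∀ a b : K, min (ν a) (ν b) ≤ ν (a + b)

/-- The valuation `ν` is nontrivial: `ν(K*) ≠ {0}`. -/
def IsNontrivialVal {K : Type} [Field K] (ν : K → Rbar) : Prop :=
  ∃ a : K, a ≠ 0 ∧ ν a ≠ 0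

/-- The trivial valuation on a field `k`: `ν(a) = 0` for `a ≠ 0` and `ν(0) = ∞`. -/
def nuTriv (k : Type) [Field k] : k → Rbar := fun a => if a = 0 then ⊤ else 0

/-- `K` is complete with respect to the valuation `ν`, i.e. with respect to the induced
nonarchimedean absolute value `expNeg ∘ ν`: every Cauchy sequence converges. -/
def VComplete {K : Type} [Field K] (ν : K → Rbar) : Prop :=
  ∀ s : ℕ → K,
    (∀ ε : ℝ, 0 < ε → ∃ N : ℕ, ∀ p ≥ N, ∀ q ≥ N, expNeg (ν (s p - s q)) < ε) →
    ∃ L : K, ∀ ε : ℝ, 0 < ε → ∃ N : ℕ, ∀ p ≥ N, expNeg (ν (s p - L)) < ε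

/-- A multiplicative seminorm on a commutative ring `A`: a nonnegative real-valued
function with `|0| = 0`, `|1| = 1`, `|fg| = |f|·|g|` and `|f + g| ≤ |f| + |g|`. -/
structure IsMultSeminorm {A : Type} [CommRing A] (p : A → ℝ) : Prop where
  nonneg : ∀ f, 0 ≤ p f
  map_zero : p 0 = 0
  map_one : p 1 = 1
  map_mul : ∀ f g, p (f * g) = p f * p g
  add_le : ∀ f g, p (f + g) ≤ p f + p g

/-- A seminorm on the `K`-algebra `A` is compatible with `ν` if `|a| = exp(−ν(a))` for
every scalar `a ∈ K`. -/
def Compat {K A : Type} [Field K] [CommRing A] [Algebra K A] (ν : K → Rbar) (p : A → ℝ) :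
    Prop :=
  ∀ a : K, p (algebraMap K A a) = expNeg (ν a)

/-- The analytification `X^an` of the affine variety `X = Spec A` over the complete
nonarchimedean field `(K, ν)`: the set of multiplicative seminorms on `A` compatible with
`ν`, topologized (as a subset of `A → ℝ` with the product topology) by the coarsest
topology making `x ↦ |f|_x` continuous for every `f ∈ A`. -/
def Xan (K A : Type) [Field K] [CommRing A] [Algebra K A] (ν : K → Rbar) : Set (A → ℝ) :=
  {p | IsMultSeminorm p ∧ Compat ν p}

/-- The analytification `X^an` over a trivially valued field `k`: the set of
multiplicative seminorms on `A` that are equal to `1` on `k*`, with the topology of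
pointwise convergence. -/
def XanTriv (k A : Type) [Field k] [CommRing A] [Algebra k A] : Set (A → ℝ) :=
  {p | IsMultSeminorm p ∧ ∀ a : k, a ≠ 0 → p (algebraMap k A a) = 1}

/-- The projection `π_ι : X^an → R̄^m` attached to the affine embedding `ι` given by the
generators `f 0, ..., f (m-1)` of `A`: `x ↦ (−log|f 0|_x, ..., −log|f (m-1)|_x)`. -/
def piIota {K A : Type} [Field K] [CommRing A] [Algebra K A] (ν : K → Rbar) {m : ℕ}
    (f : Fin m → A) (x : ↥(Xan K A ν)) : Fin m → Rbar :=
  fun i => negLog (x.1 (f i))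

/-- The projection `π_ι : X^an → R̄^m` for a trivially valued base field. -/
def piIotaTriv {k A : Type} [Field k] [CommRing A] [Algebra k A] {m : ℕ}
    (f : Fin m → A) (x : ↥(XanTriv k A)) : Fin m → Rbar :=
  fun i => negLog (x.1 (f i))

/-- The tropicalization `Trop(X, ι)` of the affine embedding `ι : X ↪ A^m` of
`X = Spec A` given by the generators `f` of `A`: the closure in `R̄^m` of the set of
coordinatewise valuations of the `K`-points of `X`. -/
def TropX {K A : Type} [Field K] [CommRing A] [Algebra K A] (ν : K → Rbar) {m : ℕ}
    (f : Fin m → A) : Set (Fin m → Rbar) :=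
  closure {v | ∃ φ : A →ₐ[K] K, v = fun i => ν (φ (f i))}

/-- The tropicalization `Trop(φ) : R̄^m → R̄^n` of the equivariant morphism
`φ : A^m → A^n` whose coordinates are `y_j ↦ c_j · x^{a_j}`, namely
`v ↦ (ν(c_1) + ⟨a_1, v⟩, ..., ν(c_n) + ⟨a_n, v⟩)`, with the conventions `ν(0) = ∞`,
`∞ + t = ∞`, `a_i · ∞ = ∞` for `a_i > 0`, and `0 · ∞ = 0`. -/
def tropMap {K : Type} [Field K] (ν : K → Rbar) {m n : ℕ} (c : Fin n → K)
    (a : Fin n → Fin m → ℕ) (v : Fin m → Rbar) : Fin n → Rbar :=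
  fun j => ν (c j) + ∑ i, (a j i) • v i

/-- The affine embeddings of `X = Spec A`: an embedding `ι : X ↪ A^m` is a tuple of
generators of `A` as a `K`-algebra. -/
def AffEmb (K A : Type) [Field K] [CommRing A] [Algebra K A] : Type :=
  Σ m : ℕ, {f : Fin m → A // Algebra.adjoin K (Set.range f) = ⊤}

/-- The map `X^an → Π_ι R̄^{m(ι)}`, `x ↦ (π_ι(x))_ι`, over all affine embeddings `ι`. -/
def bigMap (K A : Type) [Field K] [CommRing A] [Algebra K A] (ν : K → Rbar)
    (x : ↥(Xan K A ν)) : ∀ e : AffEmb K A, Fin e.1 → Rbar :=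
  fun e => piIota ν e.2.1 x

/-- The inverse limit `varprojlim Trop(X, ι)`, realized inside `Π_ι R̄^{m(ι)}`: families
`(y_ι)` with `y_ι ∈ Trop(X, ι)` for all `ι` and `y_ȷ = Trop(φ)(y_ι)` for every
equivariant morphism `φ : A^{m(ι)} → A^{m(ȷ)}` with `ȷ = φ ∘ ι`. -/
def limitSet (K A : Type) [Field K] [CommRing A] [Algebra K A] (ν : K → Rbar) :
    Set (∀ e : AffEmb K A, Fin e.1 → Rbar) :=
  {y | (∀ e : AffEmb K A, y e ∈ TropX ν e.2.1) ∧
    ∀ (e e' : AffEmb K A) (c : Fin e'.1 → K) (a : Fin e'.1 → Fin e.1 → ℕ),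
      (∀ j, e'.2.1 j = algebraMap K A (c j) * ∏ i, (e.2.1 i) ^ (a j i)) →
      y e' = tropMap ν c a (y e)}

/-- The ring of Laurent polynomials `K[x_1^{±1}, ..., x_m^{±1}]`, i.e. the group algebra
of `ℤ^m` over `K`. -/
abbrev Laur (K : Type) [Field K] (m : ℕ) : Type := AddMonoidAlgebra K (Fin m → ℤ)

/-- Evaluation of a Laurent polynomial at a point `y ∈ K^m` (meaningful when the
relevant coordinates of `y` are invertible). -/
def lEval {K : Type} [Field K] {m : ℕ} (y : Fin m → K) (g : Laur K m) : K :=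
  ∑ u ∈ g.coeff.support, g.coeff u * ∏ i, (y i) ^ (u i)

/-- The tropical minimum of the Laurent polynomial `f` at `v ∈ ℝ^m` is attained twice:
the minimum of `ν(a_u) + ⟨u, v⟩` over `u ∈ supp(f)` is achieved by at least two distinct
`u ∈ supp(f)`.  (Equivalently, the initial form of `f` at `v` is not a monomial.) -/
def MinTwice {K : Type} [Field K] {m : ℕ} (ν : K → Rbar) (f : Laur K m) (v : Fin m → ℝ) :
    Prop :=
  ∃ u ∈ f.coeff.support, ∃ u' ∈ f.coeff.support, u ≠ u' ∧
    ν (f.coeff u) + ((∑ i, (u i : ℝ) * v i : ℝ) : Rbar)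
      = ν (f.coeff u') + ((∑ i, (u' i : ℝ) * v i : ℝ) : Rbar) ∧
    ∀ w ∈ f.coeff.support,
      ν (f.coeff u) + ((∑ i, (u i : ℝ) * v i : ℝ) : Rbar)
        ≤ ν (f.coeff w) + ((∑ i, (w i : ℝ) * v i : ℝ) : Rbar)

/-- With the trivial valuation: the minimum of `⟨u, w⟩` over `supp g` is attained by at
least two distinct `u ∈ supp g`. -/
def MinTwiceTriv {k : Type} [Field k] {m : ℕ} (g : Laur k m) (w : Fin m → ℝ) : Prop :=
  ∃ u ∈ g.coeff.support, ∃ u' ∈ g.coeff.support, u ≠ u' ∧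
    (∑ i, (u i : ℝ) * w i) = (∑ i, (u' i : ℝ) * w i) ∧
    ∀ z ∈ g.coeff.support, (∑ i, (u i : ℝ) * w i) ≤ ∑ i, (z i : ℝ) * w i

/-- The tropicalization `T_trop(J)` of an ideal of Laurent polynomials: the set of
`v ∈ ℝ^m` such that for every nonzero `f ∈ J` the tropical minimum of `f` at `v` is
attained twice. -/
def Ttrop {K : Type} [Field K] {m : ℕ} (ν : K → Rbar) (J : Ideal (Laur K m)) :
    Set (Fin m → ℝ) :=
  {v | ∀ f ∈ J, f ≠ 0 → MinTwice ν f v}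

/-- The `K`-points of the closed subvariety of the torus `T^m` cut out by the ideal `I`:
points of `(K*)^m` at which every element of `I` vanishes. -/
def torusPoints {K : Type} [Field K] {m : ℕ} (I : Ideal (Laur K m)) :
    Set (Fin m → Kˣ) :=
  {y | ∀ f ∈ I, lEval (fun i => (y i : K)) f = 0}

/-- The real number `ν(a)` (with junk value `0` when `ν(a) = ∞`, i.e. when `a = 0`). -/
def vR {K : Type} [Field K] (ν : K → Rbar) (a : K) : ℝ := WithTop.untopD 0 (ν a)

/-- The set `{trop(y) : y ∈ X(K)} ⊆ ℝ^m` of coordinatewise valuations of the `K`-points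
of the closed subvariety of the torus cut out by `I`; `trop(X)` is its closure. -/
def tropImg {K : Type} [Field K] {m : ℕ} (ν : K → Rbar) (I : Ideal (Laur K m)) :
    Set (Fin m → ℝ) :=
  {w | ∃ y ∈ torusPoints I, w = fun i => vR ν ((y i : Kˣ) : K)}

/-- The `K`-points of the closed subvariety of `A^m` cut out by the ideal `J`. -/
def affPoints {K : Type} [Field K] {m : ℕ} (J : Ideal (MvPolynomial (Fin m) K)) :
    Set (Fin m → K) :=
  {y | ∀ f ∈ J, MvPolynomial.eval y f = 0}

/-- The extended tropicalization in `R̄^m` of a set of points of `A^m(K)`: the closure of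
the set of coordinatewise valuations. -/
def TropAff {K : Type} [Field K] {m : ℕ} (ν : K → Rbar) (S : Set (Fin m → K)) :
    Set (Fin m → Rbar) :=
  closure {v | ∃ y ∈ S, v = fun i => ν (y i)}

/-- The coefficientwise extension map
`k[x_1^{±1}, ..., x_m^{±1}] → K[x_1^{±1}, ..., x_m^{±1}]` along `algebraMap k K`. -/
def laurExt (k K : Type) [Field k] [Field K] [Algebra k K] (m : ℕ) :
    Laur k m →ₐ[k] Laur K m :=
  (AddMonoidAlgebra.lift (R := k) (M := Fin m → ℤ) (A := Laur K m)) (AddMonoidAlgebra.of K (Fin m → ℤ))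

/-- The `i`-th coordinate function `x_i` in the coordinate ring
`k[X] = k[x_1^{±1}, ..., x_m^{±1}] / I` of a closed subvariety of the torus. -/
def coordLaur {k : Type} [Field k] {m : ℕ} (I : Ideal (Laur k m)) (i : Fin m) :
    Laur k m ⧸ I :=
  Ideal.Quotient.mk I (AddMonoidAlgebra.single (Pi.single i (1 : ℤ)) (1 : k))

/-- The projection `π : X^an → ℝ^m`, `x ↦ (−log|x_1|_x, ..., −log|x_m|_x)`, for a closed
subvariety of the torus over a trivially valued field. -/
def piTorus {k : Type} [Field k] {m : ℕ} (I : Ideal (Laur k m))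
    (x : ↥(XanTriv k (Laur k m ⧸ I))) : Fin m → ℝ :=
  fun i => -Real.log (x.1 (coordLaur I i))

/-- `trop(X)` for a closed subvariety of the torus over a trivially valued field: the
set of `v ∈ ℝ^m` such that for every nonzero `f ∈ I` the minimum of `⟨u, v⟩` over
`supp f` is attained at least twice. -/
def tropTrivTorus {k : Type} [Field k] {m : ℕ} (I : Ideal (Laur k m)) :
    Set (Fin m → ℝ) :=
  {v | ∀ f ∈ I, f ≠ 0 → MinTwiceTriv f v}

/-- The vanishing ideal of `X ∩ T^{I₀}` for the affine embedding of `X = Spec A` given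
by generators `f`: Laurent polynomials in the variables `x_i`, `i ∈ I₀` (support
condition), vanishing at every `k`-point `y` of `X` with `y_i ≠ 0` iff `i ∈ I₀`. -/
def stratVanishing (k A : Type) [Field k] [CommRing A] [Algebra k A] {m : ℕ}
    (f : Fin m → A) (I0 : Finset (Fin m)) : Set (Laur k m) :=
  {g | (∀ u ∈ g.coeff.support, ∀ i, i ∉ I0 → u i = 0) ∧
    ∀ φ : A →ₐ[k] k, (∀ i, φ (f i) ≠ 0 ↔ i ∈ I0) → lEval (fun i => φ (f i)) g = 0}

/-- The extended tropicalization `Trop(X, ι) ⊆ R̄^m` over a trivially valued field: the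
union over `I₀ ⊆ {1, ..., m}` of the sets `trop(X ∩ T^{I₀})`, each embedded in the
stratum `ℝ^{I₀} = {v : v_i < ∞ iff i ∈ I₀}` (coordinates `∞` off `I₀`). -/
def TropStrat (k A : Type) [Field k] [CommRing A] [Algebra k A] {m : ℕ}
    (f : Fin m → A) : Set (Fin m → Rbar) :=
  {v | ∃ (I0 : Finset (Fin m)) (w : Fin m → ℝ),
        (v = fun i => if i ∈ I0 then ((w i : ℝ) : Rbar) else ⊤) ∧
        ∀ g ∈ stratVanishing k A f I0, g ≠ 0 → MinTwiceTriv g w}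

/-- The map `X^an → Π_ι R̄^{m(ι)}` over a trivially valued field. -/
def bigMapTriv (k A : Type) [Field k] [CommRing A] [Algebra k A]
    (x : ↥(XanTriv k A)) : ∀ e : AffEmb k A, Fin e.1 → Rbar :=
  fun e => piIotaTriv e.2.1 x

/-- The inverse limit `varprojlim Trop(X, ι)` over a trivially valued field, realized
inside `Π_ι R̄^{m(ι)}`. -/
def limitSetTriv (k A : Type) [Field k] [CommRing A] [Algebra k A] :
    Set (∀ e : AffEmb k A, Fin e.1 → Rbar) :=
  {y | (∀ e : AffEmb k A, y e ∈ TropStrat k A e.2.1) ∧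
    ∀ (e e' : AffEmb k A) (c : Fin e'.1 → k) (a : Fin e'.1 → Fin e.1 → ℕ),
      (∀ j, e'.2.1 j = algebraMap k A (c j) * ∏ i, (e.2.1 i) ^ (a j i)) →
      y e' = tropMap (nuTriv k) c a (y e)}


/-!
Scalar extension turns `I` into the `K`-span of its image, with the valuations of coefficients
unchanged; this gives `T_trop(I_K) ⊆ T_trop(I)`. Conversely, suppose some `f ∈ I_K` has a unique
tropical minimum at `v`. If a nonzero `h ∈ I_K` has strictly smaller support, rescale `h` so that
it dominates `f` coefficientwise with a tie somewhere: then `h` itself or `f - h` still has its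
unique minimum at the same exponent, and has smaller support. So some element of `I_K` of minimal
support (a circuit) has a unique minimum. But a circuit of the `K`-span of a `k`-subspace `W` is a
multiple of an element of `W`: applying a `k`-linear functional of `K` to its coefficients gives an
element of `W` whose support lies inside that of the circuit, hence is proportional to it.
Rescaling does not change whether the minimum is attained twice, contradicting `v ∈ T_trop(I)`.
-/

open scoped Pointwise

theorem coeff_support_nonempty {R : Type} [Field R] {m : ℕ} {f : Laur R m} (hf : f ≠ 0) :
    f.coeff.support.Nonempty :=
  Finsupp.support_nonempty_iff.2 (AddMonoidAlgebra.coeff_eq_zero.not.2 hf)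

section LaurentExtension

variable {k K : Type} [Field k] [Field K] [Algebra k K] {m : ℕ}

theorem laurExt_eq_mapAlgHom :
    laurExt k K m = AddMonoidAlgebra.mapAlgHom (Fin m → ℤ) (Algebra.ofId k K) := by
  refine AddMonoidAlgebra.algHom_ext (fun u => ?_) (Subsingleton.elim _ _)
  simp [laurExt]

theorem laurExt_coeff (g : Laur k m) (u : Fin m → ℤ) :
    (laurExt k K m g).coeff u = algebraMap k K (g.coeff u) := by
  rw [laurExt_eq_mapAlgHom, AddMonoidAlgebra.coeff_mapAlgHom]
  rfl

theorem support_laurExt (g : Laur k m) :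
    (laurExt k K m g).coeff.support = g.coeff.support := by
  ext u
  simp [laurExt_coeff]

theorem laurExt_injective : Function.Injective (laurExt k K m) := fun f g h => by
  ext u
  simpa [laurExt_coeff] using congrArg (fun x => x.coeff u) h

theorem mem_span_laurExt_of_mem_map {I : Ideal (Laur k m)} {f : Laur K m}
    (hf : f ∈ I.map (laurExt k K m).toRingHom) :
    f ∈ Submodule.span K (laurExt k K m '' I) := by
  set monomials : Set (Laur K m) := Set.range fun u => AddMonoidAlgebra.single u 1
  have hmonomial : monomials • (laurExt k K m '' I) ⊆ laurExt k K m '' I := by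
    rintro _ ⟨_, ⟨u, rfl⟩, _, ⟨g, hg, rfl⟩, rfl⟩
    refine ⟨_, I.mul_mem_left (AddMonoidAlgebra.single u 1) hg, ?_⟩
    simp [laurExt_eq_mapAlgHom]
  have hspan : Submodule.span K monomials = ⊤ := by
    simp only [monomials, ← AddMonoidAlgebra.basis_apply]
    exact (AddMonoidAlgebra.basis (Fin m → ℤ) K).span_eq
  refine Submodule.span_mono hmonomial ?_
  rw [Submodule.span_smul_of_span_eq_top hspan]
  exact hf

def coeffMap (φ : K →ₗ[k] k) : Laur K m →ₗ[k] Laur k m :=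
  (AddMonoidAlgebra.coeffLinearEquiv k).symm.toLinearMap ∘ₗ Finsupp.mapRange.linearMap φ ∘ₗ
    (AddMonoidAlgebra.coeffLinearEquiv k).toLinearMap

theorem coeffMap_coeff (φ : K →ₗ[k] k) (x : Laur K m) (u : Fin m → ℤ) :
    (coeffMap φ x).coeff u = φ (x.coeff u) := rfl

theorem coeffMap_smul_laurExt (φ : K →ₗ[k] k) (c : K) (g : Laur k m) :
    coeffMap φ (c • laurExt k K m g) = φ c • g := by
  ext u
  rw [AddMonoidAlgebra.coeff_smul, Finsupp.smul_apply, coeffMap_coeff, AddMonoidAlgebra.coeff_smul,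
    Finsupp.smul_apply, laurExt_coeff, smul_eq_mul, mul_comm, ← Algebra.smul_def, map_smul,
    smul_eq_mul, smul_eq_mul, mul_comm]

theorem coeffMap_mem_of_mem_span (φ : K →ₗ[k] k) {W : Submodule k (Laur k m)} {x : Laur K m}
    (hx : x ∈ Submodule.span K (laurExt k K m '' W)) : coeffMap φ x ∈ W := by
  obtain ⟨n, c, g, rfl⟩ := Submodule.mem_span_set'.1 hx
  rw [map_sum]
  refine W.sum_mem fun i _ => ?_
  obtain ⟨w, hw, hgw⟩ := (g i).2
  rw [← hgw, coeffMap_smul_laurExt]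
  exact W.smul_mem _ hw

def HasMinimalSupport (M : Submodule K (Laur K m)) (x : Laur K m) : Prop :=
  ∀ h ∈ M, h ≠ 0 → h.coeff.support ⊆ x.coeff.support → h.coeff.support = x.coeff.support

theorem exists_eq_smul_laurExt_of_hasMinimalSupport {W : Submodule k (Laur k m)} {x : Laur K m}
    (hxW : x ∈ Submodule.span K (laurExt k K m '' W)) (hx0 : x ≠ 0)
    (hmin : HasMinimalSupport (Submodule.span K (laurExt k K m '' W)) x) :
    ∃ c : K, ∃ g ∈ W, x = c • laurExt k K m g := by
  obtain ⟨u0, hu0⟩ := coeff_support_nonempty hx0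
  obtain ⟨φ, hφ⟩ := Module.Projective.exists_dual_eq_one k (Finsupp.mem_support_iff.1 hu0)
  set g := coeffMap φ x
  have hgW : g ∈ W := coeffMap_mem_of_mem_span φ hxW
  have hgu0 : g.coeff u0 = 1 := hφ
  have hEgW : laurExt k K m g ∈ Submodule.span K (laurExt k K m '' W) :=
    Submodule.subset_span ⟨g, hgW, rfl⟩
  have hEg_supp : (laurExt k K m g).coeff.support = x.coeff.support := by
    refine hmin _ hEgW ?_ fun u hu => ?_
    · rw [Ne, ← map_zero (laurExt k K m), laurExt_injective.eq_iff]
      intro hg0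
      simp [hg0] at hgu0
    · rw [support_laurExt, Finsupp.mem_support_iff, coeffMap_coeff] at hu
      exact Finsupp.mem_support_iff.2 fun hxu => hu (by rw [hxu, map_zero])
  refine ⟨x.coeff u0, g, hgW, ?_⟩
  set y := x - x.coeff u0 • laurExt k K m g
  have hyu0 : y.coeff u0 = 0 := by simp [y, laurExt_coeff, hgu0]
  by_contra hne
  have hy_supp : y.coeff.support = x.coeff.support := by
    refine hmin y (sub_mem hxW (Submodule.smul_mem _ _ hEgW)) (sub_ne_zero.2 hne) ?_
    refine (Finsupp.support_sub).trans (Finset.union_subset le_rfl ?_)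
    exact (Finsupp.support_smul).trans hEg_supp.le
  rw [← hy_supp, Finsupp.mem_support_iff] at hu0
  exact hu0 hyu0

end LaurentExtension

section Tropical

variable {K : Type} [Field K] {m : ℕ} {ν : K → Rbar} {v : Fin m → ℝ}

namespace IsVal

theorem map_one_of_ne_top (hν : IsVal ν) {a : K} (ha : ν a ≠ ⊤) : ν 1 = 0 := by
  have h : 0 + ν a = ν 1 + ν a := by rw [zero_add, ← hν.map_mul, one_mul]
  exact (WithTop.add_right_cancel ha h).symm

def toAddValuation (hν : IsVal ν) (h1 : ν 1 = 0) : AddValuation K Rbar :=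
  AddValuation.of ν hν.map_zero h1 hν.min_le_add hν.map_mul

end IsVal

def tropTerm (ν : K → Rbar) (f : Laur K m) (v : Fin m → ℝ) (u : Fin m → ℤ) : Rbar :=
  ν (f.coeff u) + ((∑ i, (u i : ℝ) * v i : ℝ) : Rbar)

def IsUniqueMinAt (ν : K → Rbar) (f : Laur K m) (v : Fin m → ℝ) (u0 : Fin m → ℤ) :
    Prop :=
  u0 ∈ f.coeff.support ∧
    ∀ u ∈ f.coeff.support, u ≠ u0 → tropTerm ν f v u0 < tropTerm ν f v u

theorem IsUniqueMinAt.ne_zero {f : Laur K m} {u0 : Fin m → ℤ} (h : IsUniqueMinAt ν f v u0) :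
    f ≠ 0 := by
  rintro rfl
  simp [IsUniqueMinAt] at h

theorem IsUniqueMinAt.not_minTwice {f : Laur K m} {u0 : Fin m → ℤ}
    (h : IsUniqueMinAt ν f v u0) : ¬ MinTwice ν f v := by
  rintro ⟨u, hu, u', hu', hne, heq, hmin⟩
  by_cases hu0 : u = u0
  · subst hu0
    exact (h.2 u' hu' hne.symm).ne heq
  · exact (h.2 u hu hu0).not_ge (hmin u0 h.1)

theorem exists_isUniqueMinAt_of_not_minTwice {f : Laur K m} (hf : f ≠ 0)
    (h : ¬ MinTwice ν f v) : ∃ u0, IsUniqueMinAt ν f v u0 := by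
  obtain ⟨u0, hu0, hmin⟩ := f.coeff.support.exists_min_image (tropTerm ν f v)
    (coeff_support_nonempty hf)
  exact ⟨u0, hu0, fun u hu hne =>
    (hmin u hu).lt_of_ne fun heq => h ⟨u0, hu0, u, hu, hne.symm, heq, hmin⟩⟩

theorem IsUniqueMinAt.of_le {x y : Laur K m} {u0 : Fin m → ℤ} (hx : IsUniqueMinAt ν x v u0)
    (hsupp : y.coeff.support ⊆ x.coeff.support) (hu0 : u0 ∈ y.coeff.support)
    (hle : ∀ u, ν (x.coeff u) ≤ ν (y.coeff u)) (hle0 : ν (y.coeff u0) ≤ ν (x.coeff u0)) :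
    IsUniqueMinAt ν y v u0 :=
  ⟨hu0, fun u hu hne => calc
    tropTerm ν y v u0 ≤ tropTerm ν x v u0 := add_le_add_left hle0 _
    _ < tropTerm ν x v u := hx.2 u (hsupp hu) hne
    _ ≤ tropTerm ν y v u := add_le_add_left (hle u) _⟩

theorem MinTwice.smul (hν : IsVal ν) {f : Laur K m} (h : MinTwice ν f v) {c : K} (hc : c ≠ 0) :
    MinTwice ν (c • f) v := by
  have hsupp : (c • f).coeff.support = f.coeff.support := Finsupp.support_smul_eq hc
  have hterm : ∀ u, tropTerm ν (c • f) v u = ν c + tropTerm ν f v u := fun u => by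
    simp only [tropTerm, AddMonoidAlgebra.coeff_smul, Finsupp.smul_apply, smul_eq_mul, hν.map_mul,
      add_assoc]
  obtain ⟨u, hu, u', hu', hne, heq, hmin⟩ := h
  refine ⟨u, hsupp ▸ hu, u', hsupp ▸ hu', hne, ?_, fun w hw => ?_⟩
  · change tropTerm ν (c • f) v u = tropTerm ν (c • f) v u'
    rw [hterm, hterm]
    exact congrArg _ heq
  · change tropTerm ν (c • f) v u ≤ tropTerm ν (c • f) v w
    rw [hterm, hterm]
    exact add_le_add_right (hmin w (hsupp ▸ hw)) _

theorem minTwice_laurExt_iff {k : Type} [Field k] [Algebra k K] {νk : k → Rbar}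
    (hext : ∀ a : k, ν (algebraMap k K a) = νk a) (g : Laur k m) :
    MinTwice ν (laurExt k K m g) v ↔ MinTwice νk g v := by
  simp only [MinTwice, support_laurExt, laurExt_coeff, hext]

theorem exists_smul_dominating (hν : IsVal ν) {x h : Laur K m} (hh0 : h ≠ 0)
    (hsub : h.coeff.support ⊆ x.coeff.support) :
    ∃ c : K, c ≠ 0 ∧ ∃ us ∈ h.coeff.support, (c • h).coeff us = x.coeff us ∧
      ∀ u, ν (x.coeff u) ≤ ν ((c • h).coeff u) := by
  obtain ⟨us, hus, hmax⟩ := h.coeff.support.exists_max_image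
    (fun u => ν (x.coeff u / h.coeff u))
    (coeff_support_nonempty hh0)
  have hhus : h.coeff us ≠ 0 := Finsupp.mem_support_iff.1 hus
  refine ⟨x.coeff us / h.coeff us, div_ne_zero (Finsupp.mem_support_iff.1 (hsub hus)) hhus,
    us, hus, by simp [hhus], fun u => ?_⟩
  simp only [AddMonoidAlgebra.coeff_smul, Finsupp.smul_apply, smul_eq_mul]
  by_cases hu : u ∈ h.coeff.support
  · have hhu : h.coeff u ≠ 0 := Finsupp.mem_support_iff.1 hu
    calc ν (x.coeff u) = ν (x.coeff u / h.coeff u) + ν (h.coeff u) := by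
          rw [← hν.map_mul, div_mul_cancel₀ _ hhu]
      _ ≤ ν (x.coeff us / h.coeff us) + ν (h.coeff u) := add_le_add_left (hmax u hu) _
      _ = _ := (hν.map_mul _ _).symm
  · rw [Finsupp.notMem_support_iff.1 hu, mul_zero, hν.map_zero]
    exact le_top

theorem exists_isUniqueMinAt_of_ssubset (hν : IsVal ν) {M : Submodule K (Laur K m)}
    {x h : Laur K m} {u0 : Fin m → ℤ} (hxM : x ∈ M) (hx : IsUniqueMinAt ν x v u0)
    (hhM : h ∈ M) (hh0 : h ≠ 0) (hsub : h.coeff.support ⊂ x.coeff.support) :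
    ∃ y ∈ M, IsUniqueMinAt ν y v u0 ∧ y.coeff.support ⊂ x.coeff.support := by
  have hcard : 1 < x.coeff.support.card := by
    have := Finset.card_pos.2 (coeff_support_nonempty hh0)
    have := Finset.card_lt_card hsub
    omega
  obtain ⟨u1, hu1, hu10⟩ := x.coeff.support.exists_mem_ne hcard u0
  -- a finite value rules out the degenerate valuation `ν ≡ ⊤`, which `IsVal` allows
  have hxu0 : ν (x.coeff u0) ≠ ⊤ := (WithTop.add_ne_top.1 (hx.2 u1 hu1 hu10).ne_top).1
  have mem_of_ne_top : ∀ {y : Laur K m}, ν (y.coeff u0) ≠ ⊤ → u0 ∈ y.coeff.support :=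
    fun hy => Finsupp.mem_support_iff.2 fun hy0 => hy (by rw [hy0, hν.map_zero])
  obtain ⟨c, hc, us, hus, hcus, hdom⟩ := exists_smul_dominating hν hh0 hsub.subset
  have hsupp : (c • h).coeff.support = h.coeff.support := Finsupp.support_smul_eq hc
  rcases le_or_gt (ν ((c • h).coeff u0)) (ν (x.coeff u0)) with hle | hlt
  · exact ⟨c • h, M.smul_mem c hhM,
      hx.of_le (hsupp ▸ hsub.subset) (mem_of_ne_top (ne_top_of_le_ne_top hxu0 hle)) hdom hle,
      hsupp ▸ hsub⟩
  · set w := hν.toAddValuation (hν.map_one_of_ne_top hxu0)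
    have hcoeff : ∀ u, (x - c • h).coeff u = x.coeff u - (c • h).coeff u := fun u => by
      simp only [AddMonoidAlgebra.coeff_sub, Finsupp.sub_apply]
    have hyu0 : ν ((x - c • h).coeff u0) = ν (x.coeff u0) := by
      rw [hcoeff]
      exact w.map_sub_eq_of_lt_left hlt
    have hy_supp : (x - c • h).coeff.support ⊆ x.coeff.support :=
      Finsupp.support_sub.trans (Finset.union_subset le_rfl (hsupp ▸ hsub.subset))
    refine ⟨x - c • h, M.sub_mem hxM (M.smul_mem c hhM),
      hx.of_le hy_supp (mem_of_ne_top (hyu0 ▸ hxu0)) (fun u => ?_) hyu0.le,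
      (Finset.ssubset_iff_of_subset hy_supp).2 ⟨us, hsub.subset hus, ?_⟩⟩
    · rw [hcoeff, ← min_eq_left (hdom u)]
      exact w.map_sub _ _
    · rw [Finsupp.notMem_support_iff, hcoeff, hcus, sub_self]

theorem exists_hasMinimalSupport_isUniqueMinAt (hν : IsVal ν) {M : Submodule K (Laur K m)}
    {x : Laur K m} {u0 : Fin m → ℤ} (hxM : x ∈ M) (hx : IsUniqueMinAt ν x v u0) :
    ∃ y ∈ M, IsUniqueMinAt ν y v u0 ∧ HasMinimalSupport M y := by
  induction hn : x.coeff.support.card using Nat.strong_induction_on generalizing x with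
  | _ n ih =>
  by_cases hmin : HasMinimalSupport M x
  · exact ⟨x, hxM, hx, hmin⟩
  · simp only [HasMinimalSupport, not_forall] at hmin
    obtain ⟨h, hhM, hh0, hsub, hne⟩ := hmin
    obtain ⟨y, hyM, hy, hyx⟩ :=
      exists_isUniqueMinAt_of_ssubset hν hxM hx hhM hh0 (hsub.ssubset_of_ne hne)
    exact ih _ (hn ▸ Finset.card_lt_card hyx) hyM hy rfl

end Tropical

theorem stmt12_general {k K : Type} [Field k] [Field K]
    [Algebra k K]
    (νk : k → Rbar) (ν : K → Rbar) (hν : IsVal ν)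
    (hext : ∀ a : k, ν (algebraMap k K a) = νk a)
    (m : ℕ) (I : Ideal (Laur k m)) :
    Ttrop νk I = Ttrop ν (I.map (laurExt k K m).toRingHom) := by
  ext v
  refine ⟨fun hv f hf hf0 => ?_, fun hv g hg hg0 => ?_⟩
  · by_contra hf_two
    obtain ⟨u0, hu0⟩ := exists_isUniqueMinAt_of_not_minTwice hf0 hf_two
    obtain ⟨y, hyM, hy, hymin⟩ :=
      exists_hasMinimalSupport_isUniqueMinAt hν (mem_span_laurExt_of_mem_map hf) hu0
    obtain ⟨c, g, hgI, rfl⟩ := exists_eq_smul_laurExt_of_hasMinimalSupport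
      (W := I.restrictScalars k) hyM hy.ne_zero hymin
    obtain ⟨hc, hEg⟩ := smul_ne_zero_iff.1 hy.ne_zero
    have hg0 : g ≠ 0 := by
      rintro rfl
      exact hEg (map_zero _)
    exact hy.not_minTwice (((minTwice_laurExt_iff hext g).2 (hv g hgI hg0)).smul hν hc)
  · exact (minTwice_laurExt_iff hext g).1
      (hv _ (Ideal.mem_map_of_mem _ hg) ((map_ne_zero_iff _ laurExt_injective).2 hg0))

/-- Proposition A.1: invariance of tropicalization under extension of
valued fields.  Let `k ⊆ K` be algebraically closed fields with valuations `ν_k` on `k`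
(possibly trivial) and `ν` on `K` extending `ν_k`, neither field assumed complete.  For
an ideal `I` of `k[x_1^{±1}, ..., x_m^{±1}]` with extension `I_K`, one has
`T_trop(I) = T_trop(I_K)`. -/
theorem stmt12 {k K : Type} [Field k] [Field K] [IsAlgClosed k] [IsAlgClosed K]
    [Algebra k K]
    (νk : k → Rbar) (ν : K → Rbar) (hνk : IsVal νk) (hν : IsVal ν)
    (hext : ∀ a : k, ν (algebraMap k K a) = νk a)
    (m : ℕ) (I : Ideal (Laur k m)) :
    Ttrop νk I = Ttrop ν (I.map (laurExt k K m).toRingHom) :=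
  stmt12_general νk ν hν hext m I

end
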